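/- Let f : M → N be a morphism of pointwise finite-dimensional Z^2-persistence modules with N free. Then ker f equals the preimage under the canonical map η_M : M → Colim M of the constant submodule Δ(colim ker f) ⊆ Colim M; i.e., ker f = [colim ker f]_M. -/

import Mathlib

/-!
Colimits over a filtered category such as `ℤ²` are computed elementwise, so `η_M x` comes from
`colim (ker f)` iff some transition map `M_z → M_u` carries `x` into `ker f_u`. Naturality of `f`
then gives `N_{z → u} (f_z x) = 0`, and the transition maps of a free module are injective.
-/

open CategoryTheory Limits
open scoped Classical

/-- `ℤⁿ` with the product partial order. -/
abbrev Zn (n : ℕ) := Fin n → ℤ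

noncomputable instance ZnCat (n : ℕ) : Category (Zn n) := Preorder.smallCategory _

/-- The category of `ℤⁿ`-persistence modules over a field `k`. -/
abbrev PersMod (n : ℕ) (k : Type) [Field k] :=
  @CategoryTheory.Functor (Zn n) (ZnCat n) (ModuleCat k) _

variable {n : ℕ} {k : Type} [Field k]

/-- The free persistence module `F(z)` generated at grade `z`:
`F(z)_w = k` if `z ≤ w` and `0` otherwise, with identity structure maps. -/
noncomputable def Fgen (k : Type) [Field k] {n : ℕ} (z : Zn n) : PersMod n k where
  obj w := ModuleCat.of k (↥(if z ≤ w then (⊤ : Submodule k k) else ⊥))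
  map {w w'} h := ModuleCat.ofHom (Submodule.inclusion (by
    by_cases hz : z ≤ w
    · simp [hz, hz.trans (leOfHom h)]
    · rw [if_neg hz]; exact fun x hx => (Submodule.mem_bot k).1 hx ▸ Submodule.zero_mem _))
  map_id := by intros; rfl
  map_comp := by intros; rfl

/-- The finite rank free persistence module `⊕ᵢ F(r i)` with basis elements of grades `r i`,
realized with components `Πᵢ F(r i)_w ⊆ k`. -/
noncomputable def FreeMod (k : Type) [Field k] {n m : ℕ} (r : Fin m → Zn n) : PersMod n k where
  obj w := ModuleCat.of k (∀ i : Fin m, ↥(if r i ≤ w then (⊤ : Submodule k k) else ⊥))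
  map {w w'} h := ModuleCat.ofHom (LinearMap.pi fun i =>
    (Submodule.inclusion (by
      by_cases hz : r i ≤ w
      · simp [hz, hz.trans (leOfHom h)]
      · rw [if_neg hz]; exact fun x hx => (Submodule.mem_bot k).1 hx ▸ Submodule.zero_mem _)).comp (LinearMap.proj i))
  map_id := by intros; rfl
  map_comp := by intros; rfl

namespace CategoryTheory

variable {J : Type} [SmallCategory J] {R : Type} [Ring R] {M N : J ⥤ ModuleCat R}

lemma Functor.map_injective_of_iso (e : M ≅ N)
    (hN : ∀ ⦃w w' : J⦄ (g : w ⟶ w'), Function.Injective (N.map g)) ⦃w w' : J⦄ (g : w ⟶ w') :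
    Function.Injective (M.map g) := by
  rw [← NatIso.naturality_2 e g]
  exact ((e.app w').symm.toLinearEquiv.injective.comp (hN g)).comp
    (e.app w).toLinearEquiv.injective

variable (f : M ⟶ N)

lemma exists_kernel_ι_app_eq {z : J} {x : M.obj z} (hx : f.app z x = 0) :
    ∃ y, (kernel.ι f).app z y = x :=
  (ShortComplex.moduleCat_exact_iff _).1
    ((ShortComplex.exact_kernel f).map ((evaluation J (ModuleCat R)).obj z)) x hx

lemma app_kernel_ι_app_apply (w : J) (y : (kernel f).obj w) :
    f.app w ((kernel.ι f).app w y) = 0 := by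
  rw [← ModuleCat.comp_apply, ← NatTrans.comp_app, kernel.condition]
  rfl

lemma colimMap_kernel_ι_colimit_ι (w : J) (y : (kernel f).obj w) :
    colimMap (kernel.ι f) (colimit.ι (kernel f) w y) = colimit.ι M w ((kernel.ι f).app w y) := by
  rw [← ModuleCat.comp_apply, ι_colimMap, ModuleCat.comp_apply]

lemma colimit_ι_mem_range_colimMap_kernel_ι {z : J} {x : M.obj z} (hx : f.app z x = 0) :
    colimit.ι M z x ∈ Set.range (colimMap (kernel.ι f)) := by
  obtain ⟨y, rfl⟩ := exists_kernel_ι_app_eq f hx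
  exact ⟨colimit.ι (kernel f) z y, colimMap_kernel_ι_colimit_ι f z y⟩

lemma app_eq_zero_of_colimit_ι_mem_range [IsFiltered J]
    (hN : ∀ ⦃w w' : J⦄ (g : w ⟶ w'), Function.Injective (N.map g)) {z : J} {x : M.obj z}
    (hx : colimit.ι M z x ∈ Set.range (colimMap (kernel.ι f))) : f.app z x = 0 := by
  obtain ⟨c, hc⟩ := hx
  obtain ⟨w, y, rfl⟩ := Concrete.colimit_exists_rep (kernel f) c
  rw [colimMap_kernel_ι_colimit_ι] at hc
  obtain ⟨u, g, h, hgh⟩ := Concrete.colimit_exists_of_rep_eq M _ _ hc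
  apply hN h
  rw [← NatTrans.naturality_apply, ← hgh, NatTrans.naturality_apply, app_kernel_ι_app_apply,
    map_zero, map_zero]

lemma app_eq_zero_iff_colimit_ι_mem_range [IsFiltered J]
    (hN : ∀ ⦃w w' : J⦄ (g : w ⟶ w'), Function.Injective (N.map g)) {z : J} (x : M.obj z) :
    f.app z x = 0 ↔ colimit.ι M z x ∈ Set.range (colimMap (kernel.ι f)) :=
  ⟨colimit_ι_mem_range_colimMap_kernel_ι f, app_eq_zero_of_colimit_ι_mem_range f hN⟩

end CategoryTheory

lemma FreeMod.map_injective {m : ℕ} (r : Fin m → Zn n) {w w' : Zn n} (h : w ⟶ w') :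
    Function.Injective ((FreeMod k r).map h) := fun _ _ hab =>
  funext fun i => Subtype.ext (congrArg (fun v => (v i : k)) hab)

theorem stmt_16_general (M N : PersMod 2 k)
    (hNfree : ∃ (m : ℕ) (r : Fin m → Zn 2), Nonempty (N ≅ FreeMod k r))
    (f : M ⟶ N) (z : Zn 2) (x : M.obj z) :
    f.app z x = 0 ↔
      (Limits.colimit.ι M z) x ∈ Set.range (Limits.colimMap (Limits.kernel.ι f)) := by
  obtain ⟨m, r, ⟨e⟩⟩ := hNfree
  exact app_eq_zero_iff_colimit_ι_mem_range f
    (Functor.map_injective_of_iso e (fun _ _ => FreeMod.map_injective r)) x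

/-- For a morphism `f : M ⟶ N` of pointwise finite-dimensional `ℤ²`-persistence modules with
`N` free, the kernel of `f` equals the preimage under the canonical map `η_M : M → Colim M` of
the constant submodule `Δ(colim ker f) ⊆ Colim M`; pointwise: `x ∈ M_z` satisfies
`f_z x = 0` iff `η_M x` lies in the image of `colim (ker f)` in `colim M`. -/
theorem stmt_16 (M N : PersMod 2 k)
    (hM : ∀ z, FiniteDimensional k (M.obj z)) (hN : ∀ z, FiniteDimensional k (N.obj z))
    (hNfree : ∃ (m : ℕ) (r : Fin m → Zn 2), Nonempty (N ≅ FreeMod k r))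
    (f : M ⟶ N) (z : Zn 2) (x : M.obj z) :
    f.app z x = 0 ↔
      (Limits.colimit.ι M z) x ∈ Set.range (Limits.colimMap (Limits.kernel.ι f)) :=
  stmt_16_general M N hNfree f z x
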